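/- Let (N_n)_{n≥0} be a sequence of nonnegative integers with N_n ≤ 2^{-(n-2)} M for all n and Σ_n N_n = K (finitely many nonzero terms), and let (a_n) be a sequence with 0 < a_n ≤ 1 and Σ_{n=0}^∞ 2^{-n} log(1/a_n) = B < ∞. Then for any n₀ ∈ ℕ, ∏_{n=0}^∞ a_n^{-N_n} ≤ a_{n₀}^{-K'} exp(4M Σ_{n=n₀+1}^∞ 2^{-n} log(1/a_n)), where K' = Σ_{n≤n₀} N_n ≤ K and (a_n) is non-increasing. -/

import Mathlib

/-!
Write `ℓ n = log (1 / a n)`, which is nonnegative and nondecreasing. Taking logarithms, the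
product becomes `∑ N n * ℓ n`. On the scales `n ≤ n₀` each `ℓ n` is at most `ℓ n₀`, which gives
the factor `a n₀ ^ (-K')`; on the scales `n > n₀` the counting bound `N n ≤ 4 M / 2 ^ n` turns
the sum into a partial sum of the nonnegative convergent tail `4 M ∑_{n > n₀} 2⁻ⁿ ℓ n`.
-/

open Finset Real

lemma zpow_neg_natCast_eq_exp {x : ℝ} (hx : 0 < x) (k : ℕ) :
    x ^ (-(k : ℤ)) = exp (k * log (1 / x)) := by
  rw [← rpow_intCast, rpow_def_of_pos hx, one_div, log_inv]
  push_cast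
  ring_nf

lemma prod_zpow_neg_eq_exp_sum {a : ℕ → ℝ} (ha : ∀ n, 0 < a n) (N : ℕ → ℕ) (s : Finset ℕ) :
    ∏ n ∈ s, a n ^ (-(N n : ℤ)) = exp (∑ n ∈ s, N n * log (1 / a n)) := by
  rw [exp_sum]
  exact prod_congr rfl fun n _ => zpow_neg_natCast_eq_exp (ha n) (N n)

lemma sum_range_succ_mul_le_of_monotone {ℓ : ℕ → ℝ} (hℓ : Monotone ℓ) (N : ℕ → ℕ) (n₀ : ℕ) :
    ∑ n ∈ range (n₀ + 1), N n * ℓ n ≤ (∑ n ∈ range (n₀ + 1), N n : ℕ) * ℓ n₀ := by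
  push_cast
  rw [sum_mul]
  refine sum_le_sum fun n hn => ?_
  exact mul_le_mul_of_nonneg_left (hℓ (Nat.lt_succ_iff.1 (mem_range.1 hn))) (Nat.cast_nonneg _)

lemma sum_range_shift_mul_le_tsum {ℓ : ℕ → ℝ} {N : ℕ → ℕ} {M : ℝ} (hℓ : ∀ n, 0 ≤ ℓ n)
    (hN : ∀ n, (N n : ℝ) ≤ 4 * M / 2 ^ n)
    (hsum : Summable fun n : ℕ => (1 / 2 ^ n : ℝ) * ℓ n) (j m : ℕ) :
    ∑ k ∈ range m, N (j + k) * ℓ (j + k)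
      ≤ 4 * M * ∑' k : ℕ, (1 / 2 ^ (k + j) : ℝ) * ℓ (k + j) := by
  have hweight : ∀ n, (N n : ℝ) * ℓ n ≤ 4 * M * ((1 / 2 ^ n : ℝ) * ℓ n) := fun n => by
    rw [← mul_assoc, mul_one_div]
    exact mul_le_mul_of_nonneg_right (hN n) (hℓ n)
  -- `0 ≤ N n` forces the weights `4 * M / 2 ^ n` to be nonnegative.
  have hnonneg : ∀ n, 0 ≤ 4 * M * ((1 / 2 ^ n : ℝ) * ℓ n) := fun n =>
    (mul_nonneg (Nat.cast_nonneg _) (hℓ n)).trans (hweight n)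
  have hshift : Summable fun k : ℕ => 4 * M * ((1 / 2 ^ (k + j) : ℝ) * ℓ (k + j)) :=
    ((summable_nat_add_iff j).2 hsum).mul_left _
  rw [← tsum_mul_left]
  calc ∑ k ∈ range m, (N (j + k) : ℝ) * ℓ (j + k)
      ≤ ∑ k ∈ range m, 4 * M * ((1 / 2 ^ (k + j) : ℝ) * ℓ (k + j)) :=
        sum_le_sum fun k _ => add_comm j k ▸ hweight (k + j)
    _ ≤ _ := hshift.sum_le_tsum _ fun k _ => hnonneg (k + j)

theorem small_divisor_product_bound_general (a : ℕ → ℝ) (N : ℕ → ℕ) (M : ℝ)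
    (ha : ∀ n, 0 < a n) (ha1 : ∀ n, a n ≤ 1) (hmono : Antitone a)
    (hsum : Summable (fun n : ℕ => (1 / 2 ^ n : ℝ) * Real.log (1 / a n)))
    (hN : ∀ n : ℕ, (N n : ℝ) ≤ 4 * M / 2 ^ n)
    (m K : ℕ) (hm : ∀ n, m ≤ n → N n = 0) (hK : K = ∑ n ∈ Finset.range m, N n) :
    ∀ n₀ : ℕ,
      (∏ n ∈ Finset.range m, a n ^ (-(N n : ℤ)))
        ≤ a n₀ ^ (-((∑ n ∈ Finset.range (n₀ + 1), N n : ℕ) : ℤ)) *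
          Real.exp (4 * M *
            ∑' n : ℕ, (1 / 2 ^ (n + n₀ + 1) : ℝ) * Real.log (1 / a (n + n₀ + 1))) ∧
      (∑ n ∈ Finset.range (n₀ + 1), N n) ≤ K := by
  intro n₀
  have hextend : ∑ n ∈ range m, N n * log (1 / a n)
      = ∑ n ∈ range (n₀ + 1 + m), N n * log (1 / a n) :=
    (eventually_constant_sum (fun n hn => by simp [hm n hn]) (Nat.le_add_left m _)).symm
  have hℓ : ∀ n, 0 ≤ log (1 / a n) := fun n => log_nonneg (one_le_one_div (ha n) (ha1 n))
  have hℓmono : Monotone fun n => log (1 / a n) := fun i j hij =>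
    log_le_log (one_div_pos.2 (ha i)) (one_div_le_one_div_of_le (ha j) (hmono hij))
  constructor
  · rw [prod_zpow_neg_eq_exp_sum ha, zpow_neg_natCast_eq_exp (ha n₀), ← exp_add, exp_le_exp,
      hextend, sum_range_add]
    refine add_le_add (sum_range_succ_mul_le_of_monotone hℓmono N n₀) ?_
    simpa only [← add_assoc] using sum_range_shift_mul_le_tsum hℓ hN hsum (n₀ + 1) m
  · rw [hK, ← eventually_constant_sum (fun n hn => hm n hn) (Nat.le_add_left m (n₀ + 1))]
    exact sum_le_sum_of_subset (range_subset_range.2 (Nat.le_add_right _ _))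

/-- Key counting estimate: a product of small divisors, with the number `N n` of factors
on scale `n` bounded by `2^{-(n-2)} M = 4 M / 2^n`, is bounded by separating the scales
below and above a threshold `n₀`. -/
theorem small_divisor_product_bound (a : ℕ → ℝ) (N : ℕ → ℕ) (M : ℝ) (hM : 0 ≤ M)
    (ha : ∀ n, 0 < a n) (ha1 : ∀ n, a n ≤ 1) (hmono : Antitone a)
    (hsum : Summable (fun n : ℕ => (1 / 2 ^ n : ℝ) * Real.log (1 / a n)))
    (hN : ∀ n : ℕ, (N n : ℝ) ≤ 4 * M / 2 ^ n)
    (m K : ℕ) (hm : ∀ n, m ≤ n → N n = 0) (hK : K = ∑ n ∈ Finset.range m, N n) :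
    ∀ n₀ : ℕ,
      (∏ n ∈ Finset.range m, a n ^ (-(N n : ℤ)))
        ≤ a n₀ ^ (-((∑ n ∈ Finset.range (n₀ + 1), N n : ℕ) : ℤ)) *
          Real.exp (4 * M *
            ∑' n : ℕ, (1 / 2 ^ (n + n₀ + 1) : ℝ) * Real.log (1 / a (n + n₀ + 1))) ∧
      (∑ n ∈ Finset.range (n₀ + 1), N n) ≤ K :=
  small_divisor_product_bound_general a N M ha ha1 hmono hsum hN m K hm hK
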